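/- arXiv:2003.04912 — 2 statements merged into one kernel-verified Lean document; each statement's English description precedes it below -/
import Mathlib

section
/- For n ≥ 2, a layered permutation τ of size n is pop-stacked (i.e., lies in the image of T) if and only if τ has at least two falls, its first and last falls have size 1 or 2, and every inner fall has size 1, 2 or 3. Consequently the number of pop-stacked layered permutations of size n equals the coefficient of x^n in x + (x+x²)²/(1 − (x+x²+x³)). -/
/-- Split a list into maximal strictly decreasing contiguous blocks ("falls"). -/
def fallSplit : List ℕ → List (List ℕ)
  | [] => []
  | a :: rest =>
    match fallSplit rest with
    | (b :: bs) :: gs => if b < a then (a :: b :: bs) :: gs else [a] :: (b :: bs) :: gs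
    | gs => [a] :: gs

/-- Split a list into maximal strictly increasing contiguous blocks ("runs"). -/
def runSplit : List ℕ → List (List ℕ)
  | [] => []
  | a :: rest =>
    match runSplit rest with
    | (b :: bs) :: gs => if a < b then (a :: b :: bs) :: gs else [a] :: (b :: bs) :: gs
    | gs => [a] :: gs

/-- The flip transformation `T`: reverse every fall. -/
def flipT (l : List ℕ) : List ℕ := ((fallSplit l).map List.reverse).flatten

/-- `l` is the one-line notation of a permutation of `{1, …, n}`. -/
def IsPermList (n : ℕ) (l : List ℕ) : Prop := l.Perm (List.range' 1 n)

/-- Every pair of adjacent runs overlaps: `min R₁ < max R₂` (pop-stacked condition). -/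
def Overlapping (l : List ℕ) : Prop :=
  ∀ R₁ R₂ : List ℕ, [R₁, R₂] <:+: runSplit l → ∃ a ∈ R₁, ∃ b ∈ R₂, a < b

/-- The layered permutation with layer sizes ms, starting at value s: the direct sum of
the decreasing permutations of the given sizes. -/
def layeredList : ℕ → List ℕ → List ℕ
  | _, [] => []
  | s, m :: ms => (List.range' s m).reverse ++ layeredList (s + m) ms

/-- A permutation is layered if it is the direct sum of decreasing permutations. -/
def IsLayered (l : List ℕ) : Prop :=
  ∃ ms : List ℕ, (∀ m ∈ ms, 0 < m) ∧ l = layeredList 1 ms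

open PowerSeries

/-!
The ascents of a layered permutation are exactly the steps from the bottom of one layer to the
top of the next. So every element is a run of its own, except that the bottom of a layer and the
top of the following one lie in a common run (which continues through following layers of size
one). A run meeting two layers overlaps both of its neighbours, whereas two adjacent singleton
runs never overlap. Hence the permutation is pop-stacked iff no layer contributes two adjacent
singleton runs: the first and last layers have size at most 2, the inner ones at most 3, and
there are at least two layers.

Layered permutations of size `n` correspond to compositions of `n` (their layer sizes), and the
pop-stacked ones to `a :: mid ++ [b]` with `a, b ∈ {1, 2}` and `mid` a composition into parts
`1, 2, 3`, whose generating function is `1 / (1 - x - x² - x³)`.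
-/

def consHead (a : ℕ) : List (List ℕ) → List (List ℕ)
  | [] => [[a]]
  | g :: gs => (a :: g) :: gs

@[simp] lemma consHead_nil (a : ℕ) : consHead a [] = [[a]] := rfl

@[simp] lemma consHead_cons (a : ℕ) (g : List ℕ) (gs : List (List ℕ)) :
    consHead a (g :: gs) = (a :: g) :: gs := rfl

@[simp] lemma tail_consHead (a : ℕ) (L : List (List ℕ)) : (consHead a L).tail = L.tail := by
  cases L <;> rfl

lemma runSplit_cons (a : ℕ) (l : List ℕ) :
    runSplit (a :: l) =
      if ∀ b ∈ l.head?, a < b then consHead a (runSplit l) else [a] :: runSplit l := by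
  induction l generalizing a with
  | nil => rfl
  | cons b t ih =>
    obtain ⟨g, gs, h⟩ : ∃ g gs, runSplit (b :: t) = (b :: g) :: gs := by
      rw [ih]
      split_ifs
      · cases runSplit t <;> simp
      · simp
    rw [runSplit, h]
    simp only [List.head?_cons, Option.mem_def, Option.some.injEq, forall_eq', consHead_cons]

lemma fallSplit_cons (a : ℕ) (l : List ℕ) :
    fallSplit (a :: l) =
      if ∀ b ∈ l.head?, a ≤ b then [a] :: fallSplit l else consHead a (fallSplit l) := by
  induction l generalizing a with
  | nil => rfl
  | cons b t ih =>
    obtain ⟨g, gs, h⟩ : ∃ g gs, fallSplit (b :: t) = (b :: g) :: gs := by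
      rw [ih]
      split_ifs
      · simp
      · cases fallSplit t <;> simp
    rw [fallSplit, h]
    simp only [List.head?_cons, Option.mem_def, Option.some.injEq, forall_eq', consHead_cons,
      ← not_lt, ite_not]

lemma runSplit_append_cons {l' l : List ℕ} {c : ℕ} (hdec : (l' ++ [c]).IsChain (· > ·))
    (hc : ∀ b ∈ l.head?, c < b) :
    runSplit (l' ++ c :: l) = l'.map ([·]) ++ consHead c (runSplit l) := by
  induction l' with
  | nil => rw [List.nil_append, List.map_nil, List.nil_append, runSplit_cons, if_pos hc]
  | cons x l' ih =>
    obtain ⟨y, hy, hyx⟩ : ∃ y ∈ (l' ++ c :: l).head?, y < x := by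
      cases l' <;> simp_all [List.isChain_cons_cons]
    rw [List.cons_append, runSplit_cons, if_neg fun h => lt_asymm hyx (h y hy), ih hdec.tail]
    rfl

lemma fallSplit_append_cons {l' l : List ℕ} {c : ℕ} (hdec : (l' ++ [c]).IsChain (· > ·))
    (hc : ∀ b ∈ l.head?, c < b) :
    fallSplit (l' ++ c :: l) = (l' ++ [c]) :: fallSplit l := by
  induction l' with
  | nil => rw [List.nil_append, List.nil_append, fallSplit_cons, if_pos fun b hb => (hc b hb).le]
  | cons x l' ih =>
    obtain ⟨y, hy, hyx⟩ : ∃ y ∈ (l' ++ c :: l).head?, y < x := by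
      cases l' <;> simp_all [List.isChain_cons_cons]
    rw [List.cons_append, fallSplit_cons, if_neg fun h => (h y hy).not_gt hyx, ih hdec.tail]
    rfl

lemma reverse_range'_succ (s m : ℕ) :
    (List.range' s (m + 1)).reverse = (List.range' (s + 1) m).reverse ++ [s] := by
  simp [List.range'_succ]

lemma isChain_gt_reverse_range' (s m : ℕ) : (List.range' s m).reverse.IsChain (· > ·) :=
  List.isChain_reverse.mpr (List.pairwise_lt_range' (s := s) (n := m) 1).isChain

lemma le_of_mem_layeredList {s x : ℕ} {ms : List ℕ} (h : x ∈ layeredList s ms) : s ≤ x := by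
  induction ms generalizing s with
  | nil => simp [layeredList] at h
  | cons m ms ih =>
    rcases List.mem_append.mp h with h | h
    · exact (List.mem_range'_1.mp (List.mem_reverse.mp h)).1
    · have := ih h; omega

lemma lt_head_layeredList (s m : ℕ) (ms : List ℕ) :
    ∀ b ∈ (layeredList (s + (m + 1)) ms).head?, s < b := fun _ hb =>
  Nat.lt_of_lt_of_le (by omega) (le_of_mem_layeredList (List.mem_of_mem_head? hb))

lemma runSplit_layeredList_cons (s m : ℕ) (ms : List ℕ) :
    runSplit (layeredList s ((m + 1) :: ms)) =
      (List.range' (s + 1) m).reverse.map ([·]) ++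
        consHead s (runSplit (layeredList (s + (m + 1)) ms)) := by
  rw [layeredList, reverse_range'_succ, List.append_assoc, List.singleton_append,
    runSplit_append_cons (reverse_range'_succ s m ▸ isChain_gt_reverse_range' s (m + 1))
      (lt_head_layeredList s m ms)]

lemma fallSplit_layeredList_cons (s m : ℕ) (ms : List ℕ) :
    fallSplit (layeredList s ((m + 1) :: ms)) =
      (List.range' s (m + 1)).reverse :: fallSplit (layeredList (s + (m + 1)) ms) := by
  rw [layeredList, reverse_range'_succ, List.append_assoc, List.singleton_append,
    fallSplit_append_cons (reverse_range'_succ s m ▸ isChain_gt_reverse_range' s (m + 1))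
      (lt_head_layeredList s m ms)]

lemma map_length_fallSplit_layeredList {ms : List ℕ} (hpos : ∀ m ∈ ms, 0 < m) (s : ℕ) :
    (fallSplit (layeredList s ms)).map List.length = ms := by
  induction ms generalizing s with
  | nil => rfl
  | cons m ms ih =>
    obtain ⟨k, rfl⟩ := Nat.exists_eq_add_one.mpr (hpos m List.mem_cons_self)
    rw [fallSplit_layeredList_cons, List.map_cons, ih (fun x hx => hpos x (by simp [hx]))]
    simp

lemma layeredList_perm_range' (s : ℕ) (ms : List ℕ) :
    (layeredList s ms).Perm (List.range' s ms.sum) := by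
  induction ms generalizing s with
  | nil => simp [layeredList]
  | cons m ms ih =>
    rw [layeredList, List.sum_cons, ← List.range'_append_1]
    exact (List.reverse_perm _).append (ih (s + m))

lemma isPermList_layeredList_iff {n : ℕ} {ms : List ℕ} :
    IsPermList n (layeredList 1 ms) ↔ ms.sum = n := by
  refine ⟨fun h => ?_, fun h => h ▸ layeredList_perm_range' 1 ms⟩
  simpa using ((layeredList_perm_range' 1 ms).symm.trans h).length_eq

def RunsOverlap (R₁ R₂ : List ℕ) : Prop := ∃ a ∈ R₁, ∃ b ∈ R₂, a < b

lemma overlapping_iff_isChain (l : List ℕ) :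
    Overlapping l ↔ (runSplit l).IsChain RunsOverlap :=
  ⟨fun h => (List.isChain_isInfix _).imp fun _ _ => h _ _,
    fun h _ _ hinf => List.isChain_pair.mp (h.infix hinf)⟩

lemma flatten_runSplit (l : List ℕ) : (runSplit l).flatten = l := by
  induction l with
  | nil => rfl
  | cons a l ih =>
    rw [runSplit_cons]
    split_ifs
    · cases h : runSplit l <;> simp_all
    · simp [ih]

lemma nil_not_mem_runSplit (l : List ℕ) : [] ∉ runSplit l := by
  induction l with
  | nil => simp [runSplit]
  | cons a l ih =>
    rw [runSplit_cons]
    split_ifs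
    · cases h : runSplit l <;> simp_all
    · simp [ih]

lemma exists_gt_of_mem_runSplit {a : ℕ} {l R : List ℕ} (hl : ∀ x ∈ l, a < x)
    (hR : R ∈ runSplit l) : ∃ b ∈ R, a < b := by
  obtain ⟨b, hb⟩ := List.exists_mem_of_ne_nil R (ne_of_mem_of_not_mem hR (nil_not_mem_runSplit l))
  exact ⟨b, hb, hl b (flatten_runSplit l ▸ List.mem_flatten_of_mem hR hb)⟩

lemma not_isChain_runsOverlap_singletons {x y : ℕ} (hxy : y ≤ x) (L : List (List ℕ)) :
    ¬ ([x] :: [y] :: L).IsChain RunsOverlap := by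
  simp [List.isChain_cons_cons, RunsOverlap, hxy]

lemma isChain_consHead_iff {a : ℕ} {L : List (List ℕ)} (hL : ∀ R ∈ L, ∃ b ∈ R, a < b) :
    (consHead a L).IsChain RunsOverlap ↔ L.tail.IsChain RunsOverlap := by
  rcases L with _ | ⟨R, _ | ⟨R', L⟩⟩
  · simp
  · simp
  · obtain ⟨b, hb, hab⟩ := hL R' (by simp)
    simp only [consHead_cons, List.tail_cons, List.isChain_cons_cons, and_iff_right_iff_imp]
    exact fun _ => ⟨a, List.mem_cons_self, b, hb, hab⟩

lemma isChain_singleton_cons_consHead_iff {a : ℕ} {L : List (List ℕ)}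
    (hL : ∀ R ∈ L, ∃ b ∈ R, a + 1 < b) :
    ([a + 1] :: consHead a L).IsChain RunsOverlap ↔ L ≠ [] ∧ L.tail.IsChain RunsOverlap := by
  rcases L with _ | ⟨R, L⟩
  · simpa using not_isChain_runsOverlap_singletons (Nat.le_succ a) []
  · obtain ⟨b, hb, hab⟩ := hL R List.mem_cons_self
    rw [consHead_cons, List.isChain_cons_cons,
      ← consHead_cons, isChain_consHead_iff fun R' hR' => ?_]
    · exact ⟨fun h => ⟨List.cons_ne_nil _ _, h.2⟩,
        fun h => ⟨⟨a + 1, List.mem_singleton_self _, b, List.mem_cons_of_mem _ hb, hab⟩, h.2⟩⟩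
    · obtain ⟨b', hb', h'⟩ := hL R' hR'
      exact ⟨b', hb', by omega⟩

lemma exists_gt_of_mem_runSplit_layeredList {s t : ℕ} {ms R : List ℕ} (hst : s < t)
    (hR : R ∈ runSplit (layeredList t ms)) : ∃ b ∈ R, s < b :=
  exists_gt_of_mem_runSplit (fun _ hx => hst.trans_le (le_of_mem_layeredList hx)) hR

lemma map_singleton_reverse_range'_succ (t k : ℕ) :
    (List.range' t (k + 1)).reverse.map ([·]) = [t + k] :: (List.range' t k).reverse.map ([·]) := by
  simp [List.range'_concat]

lemma runSplit_layeredList_eq_nil_iff {s : ℕ} {ms : List ℕ} (hpos : ∀ m ∈ ms, 0 < m) :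
    runSplit (layeredList s ms) = [] ↔ ms = [] := by
  rcases ms with _ | ⟨m, ms⟩
  · simp [layeredList, runSplit]
  · obtain ⟨k, rfl⟩ := Nat.exists_eq_add_one.mpr (hpos m List.mem_cons_self)
    rw [runSplit_layeredList_cons]
    cases runSplit (layeredList (s + (k + 1)) ms) <;> simp

/- Dropping the first run accounts for a preceding layer: its bottom is prepended to that run,
and the merged run overlaps the next one (`isChain_consHead_iff`). -/
lemma isChain_tail_runSplit_layeredList_cons {s m : ℕ} {ms : List ℕ} (hm : 0 < m)
    (hpos : ∀ x ∈ ms, 0 < x) :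
    (runSplit (layeredList s (m :: ms))).tail.IsChain RunsOverlap ↔
      m ≤ 3 ∧ (ms = [] → m ≤ 2) ∧
        (runSplit (layeredList (s + m) ms)).tail.IsChain RunsOverlap := by
  obtain ⟨k, rfl⟩ := Nat.exists_eq_add_one.mpr hm
  rw [runSplit_layeredList_cons]
  have hL {t : ℕ} (ht : t ≤ s + k) : ∀ R ∈ runSplit (layeredList (s + (k + 1)) ms),
      ∃ b ∈ R, t < b := fun _ hR => exists_gt_of_mem_runSplit_layeredList (by omega) hR
  match k with
  | 0 => simp
  | 1 => simp [isChain_consHead_iff (hL (Nat.le_succ s))]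
  | 2 =>
    simp [List.range'_succ, isChain_singleton_cons_consHead_iff (hL (Nat.le_succ _)),
      runSplit_layeredList_eq_nil_iff hpos]
  | k + 3 =>
    rw [map_singleton_reverse_range'_succ, map_singleton_reverse_range'_succ,
      map_singleton_reverse_range'_succ, List.cons_append, List.tail_cons, List.cons_append]
    exact iff_of_false (not_isChain_runsOverlap_singletons (by omega) _) (by omega)

lemma isChain_runSplit_layeredList_cons {s m : ℕ} {ms : List ℕ} (hm : 0 < m)
    (hpos : ∀ x ∈ ms, 0 < x) :
    (runSplit (layeredList s (m :: ms))).IsChain RunsOverlap ↔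
      m ≤ 2 ∧ (ms = [] → m = 1) ∧
        (runSplit (layeredList (s + m) ms)).tail.IsChain RunsOverlap := by
  obtain ⟨k, rfl⟩ := Nat.exists_eq_add_one.mpr hm
  rw [runSplit_layeredList_cons]
  have hL {t : ℕ} (ht : t ≤ s + k) : ∀ R ∈ runSplit (layeredList (s + (k + 1)) ms),
      ∃ b ∈ R, t < b := fun _ hR => exists_gt_of_mem_runSplit_layeredList (by omega) hR
  match k with
  | 0 => simpa using isChain_consHead_iff (hL le_rfl)
  | 1 =>
    simp [isChain_singleton_cons_consHead_iff (hL le_rfl), runSplit_layeredList_eq_nil_iff hpos]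
  | k + 2 =>
    rw [map_singleton_reverse_range'_succ, map_singleton_reverse_range'_succ, List.cons_append,
      List.cons_append]
    exact iff_of_false (not_isChain_runsOverlap_singletons (by omega) _) (by omega)

lemma isChain_tail_runSplit_layeredList_iff {ms : List ℕ} (hpos : ∀ m ∈ ms, 0 < m) (s : ℕ) :
    (runSplit (layeredList s ms)).tail.IsChain RunsOverlap ↔
      (∀ x ∈ ms, x ≤ 3) ∧ ∀ b ∈ ms.getLast?, b ≤ 2 := by
  induction ms generalizing s with
  | nil => simp [layeredList, runSplit]
  | cons m ms ih =>
    have hpos' : ∀ x ∈ ms, 0 < x := fun x hx => hpos x (List.mem_cons_of_mem m hx)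
    rw [isChain_tail_runSplit_layeredList_cons (hpos m List.mem_cons_self) hpos', ih hpos']
    rcases ms with _ | ⟨m', ms⟩
    · simp
    · simp [and_assoc]

def IsPopStackedComposition (ms : List ℕ) : Prop :=
  ∃ a mid b, ms = a :: (mid ++ [b]) ∧ (a = 1 ∨ a = 2) ∧ (b = 1 ∨ b = 2) ∧
    ∀ x ∈ mid, x = 1 ∨ x = 2 ∨ x = 3

lemma isPopStackedComposition_map_iff {α : Type*} (f : α → ℕ) (L : List α) :
    IsPopStackedComposition (L.map f) ↔
      ∃ x xs y, L = x :: (xs ++ [y]) ∧ (f x = 1 ∨ f x = 2) ∧ (f y = 1 ∨ f y = 2) ∧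
        ∀ z ∈ xs, f z = 1 ∨ f z = 2 ∨ f z = 3 := by
  constructor
  · rintro ⟨a, mid, b, h, ha, hb, hmid⟩
    obtain ⟨x, tl, rfl, rfl, htl⟩ := List.map_eq_cons_iff.mp h
    obtain ⟨xs, ys, rfl, rfl, hys⟩ := List.map_eq_append_iff.mp htl
    obtain ⟨y, rfl, rfl⟩ := List.map_eq_singleton_iff.mp hys
    exact ⟨x, xs, y, rfl, ha, hb, by simpa using hmid⟩
  · rintro ⟨x, xs, y, rfl, hx, hy, hxs⟩
    exact ⟨f x, xs.map f, f y, by simp, hx, hy, by simpa using hxs⟩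

lemma IsPopStackedComposition.pos {ms : List ℕ} (h : IsPopStackedComposition ms) :
    ∀ m ∈ ms, 0 < m := by
  obtain ⟨a, mid, b, rfl, ha, hb, hmid⟩ := h
  intro m hm
  rcases List.mem_cons.mp hm with rfl | hm
  · omega
  rcases List.mem_append.mp hm with hm | hm
  · rcases hmid m hm with rfl | rfl | rfl <;> omega
  · rw [List.mem_singleton.mp hm]; omega

lemma isPopStackedComposition_cons_append_singleton_iff {m b : ℕ} {mid : List ℕ} :
    IsPopStackedComposition (m :: (mid ++ [b])) ↔
      (m = 1 ∨ m = 2) ∧ (b = 1 ∨ b = 2) ∧ ∀ x ∈ mid, x = 1 ∨ x = 2 ∨ x = 3 := by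
  refine ⟨fun ⟨a, mid', b', h, ha, hb, hmid⟩ => ?_,
    fun ⟨ha, hb, hmid⟩ => ⟨m, mid, b, rfl, ha, hb, hmid⟩⟩
  simp only [List.cons.injEq, List.append_singleton_inj] at h
  obtain ⟨rfl, rfl, rfl⟩ := h
  exact ⟨ha, hb, hmid⟩

lemma overlapping_layeredList_iff {ms : List ℕ} (hpos : ∀ m ∈ ms, 0 < m) (h2 : 2 ≤ ms.sum) :
    Overlapping (layeredList 1 ms) ↔ IsPopStackedComposition ms := by
  rcases ms with _ | ⟨m, rest⟩
  · simp at h2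
  have hpos' : ∀ x ∈ rest, 0 < x := fun x hx => hpos x (List.mem_cons_of_mem m hx)
  have hm := hpos m List.mem_cons_self
  rw [overlapping_iff_isChain, isChain_runSplit_layeredList_cons hm hpos',
    isChain_tail_runSplit_layeredList_iff hpos']
  rcases rest.eq_nil_or_concat' with rfl | ⟨mid, b, rfl⟩
  · simp only [List.sum_cons, List.sum_nil] at h2
    refine iff_of_false (fun h => by have := h.2.1 rfl; omega) ?_
    rintro ⟨a, mid, b, h, -⟩
    simpa using congrArg List.length h
  · have hb := hpos' b (by simp)
    rw [isPopStackedComposition_cons_append_singleton_iff]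
    simp only [List.append_eq_nil_iff, List.cons_ne_self, and_false, IsEmpty.forall_iff,
      List.mem_append, List.mem_cons, List.not_mem_nil, or_false, List.getLast?_append,
      List.getLast?_singleton, Option.some_or, Option.mem_def, Option.some.injEq, forall_eq',
      true_and]
    constructor
    · rintro ⟨hm2, hle, hb2⟩
      refine ⟨by omega, by omega, fun x hx => ?_⟩
      have := hle x (Or.inl hx)
      have := hpos' x (List.mem_append_left _ hx)
      omega
    · rintro ⟨ha, hb', hmid⟩
      refine ⟨by omega, ?_, by omega⟩
      rintro x (hx | rfl)
      · rcases hmid x hx with rfl | rfl | rfl <;> omega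
      · omega

def compositionsIn (A : Finset ℕ) (n : ℕ) : Finset (List ℕ) :=
  ((Finset.univ : Finset (Composition n)).image Composition.blocks).filter fun l => ∀ x ∈ l, x ∈ A

lemma mem_compositionsIn {A : Finset ℕ} (hA : 0 ∉ A) {n : ℕ} {l : List ℕ} :
    l ∈ compositionsIn A n ↔ (∀ x ∈ l, x ∈ A) ∧ l.sum = n := by
  simp only [compositionsIn, Finset.mem_filter, Finset.mem_image, Finset.mem_univ, true_and]
  refine ⟨fun ⟨⟨c, hc⟩, hl⟩ => ⟨hl, hc ▸ c.blocks_sum⟩, fun ⟨hl, hsum⟩ => ⟨?_, hl⟩⟩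
  exact ⟨⟨l, fun hx => Nat.pos_of_ne_zero (ne_of_mem_of_not_mem (hl _ hx) hA), hsum⟩, rfl⟩

lemma compositionsIn_zero {A : Finset ℕ} (hA : 0 ∉ A) : compositionsIn A 0 = {[]} := by
  ext l
  rw [mem_compositionsIn hA, Finset.mem_singleton, List.sum_eq_zero_iff]
  refine ⟨fun ⟨hA', h0⟩ => List.eq_nil_iff_forall_not_mem.mpr fun x hx => ?_, by simp +contextual⟩
  exact hA (h0 x hx ▸ hA' x hx)

lemma compositionsIn_eq_biUnion {A : Finset ℕ} (hA : 0 ∉ A) {n : ℕ} (hn : n ≠ 0) :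
    compositionsIn A n =
      (A.filter (· ≤ n)).biUnion fun a => (compositionsIn A (n - a)).image (List.cons a) := by
  ext l
  simp only [Finset.mem_biUnion, Finset.mem_filter, Finset.mem_image, mem_compositionsIn hA]
  constructor
  · rintro ⟨hl, rfl⟩
    obtain ⟨a, l, rfl⟩ := List.exists_cons_of_ne_nil fun h : l = [] => hn (by simp [h])
    exact ⟨a, ⟨hl a List.mem_cons_self, by simp⟩, l,
      ⟨fun x hx => hl x (List.mem_cons_of_mem a hx), by simp⟩, rfl⟩
  · rintro ⟨a, ⟨ha, han⟩, l, ⟨hl, hsum⟩, rfl⟩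
    exact ⟨by simpa [ha] using hl, by rw [List.sum_cons, hsum]; omega⟩

lemma card_compositionsIn {A : Finset ℕ} (hA : 0 ∉ A) {n : ℕ} (hn : n ≠ 0) :
    (compositionsIn A n).card =
      ∑ a ∈ A, if a ≤ n then (compositionsIn A (n - a)).card else 0 := by
  rw [compositionsIn_eq_biUnion hA hn, Finset.card_biUnion, Finset.sum_filter]
  · simp only [Finset.card_image_of_injective _ List.cons_injective]
  · intro a _ b _ hab
    simp only [Function.onFun, Finset.disjoint_left, Finset.mem_image]
    rintro _ ⟨l, -, rfl⟩ ⟨l', -, h⟩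
    exact hab (List.cons_eq_cons.mp h).1.symm

lemma mk_card_compositionsIn_mul {R : Type*} [CommRing R] {A : Finset ℕ} (hA : 0 ∉ A) :
    mk (fun n => ((compositionsIn A n).card : R)) * (1 - ∑ a ∈ A, X ^ a) = 1 := by
  ext n
  simp only [mul_sub, mul_one, Finset.mul_sum, map_sub, map_sum, coeff_mul_X_pow', coeff_mk,
    coeff_one]
  rcases eq_or_ne n 0 with rfl | hn
  · rw [compositionsIn_zero hA, Finset.sum_eq_zero fun a ha => if_neg fun h => hA <| by
      rwa [Nat.le_zero.mp h] at ha]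
    simp
  · rw [card_compositionsIn hA hn, if_neg hn]
    push_cast [apply_ite (Nat.cast (R := R))]
    simp

lemma inv_one_sub_sum_X_pow {k : Type*} [Field k] {A : Finset ℕ} (hA : 0 ∉ A) :
    (1 - ∑ a ∈ A, (X : k⟦X⟧) ^ a)⁻¹ = mk fun n => ((compositionsIn A n).card : k) := by
  refine (PowerSeries.inv_eq_iff_mul_eq_one ?_).mpr (mk_card_compositionsIn_mul hA)
  rw [map_sub, map_sum, Finset.sum_eq_zero fun a ha => ?_]
  · simp
  · rw [map_pow, constantCoeff_X, zero_pow (ne_of_mem_of_not_mem ha hA)]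

-- The guard `p.1 + p.2 ≤ n` protects the truncated subtraction `n - (p.1 + p.2)`.
def popStackedCompositions (n : ℕ) : Finset (List ℕ) :=
  ((Finset.Icc 1 2 ×ˢ Finset.Icc 1 2).filter fun p => p.1 + p.2 ≤ n).biUnion fun p =>
    (compositionsIn (Finset.Icc 1 3) (n - (p.1 + p.2))).image fun mid => p.1 :: (mid ++ [p.2])

lemma mem_popStackedCompositions {n : ℕ} {ms : List ℕ} :
    ms ∈ popStackedCompositions n ↔ IsPopStackedComposition ms ∧ ms.sum = n := by
  simp only [popStackedCompositions, Finset.mem_biUnion, Finset.mem_filter, Finset.mem_product,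
    Finset.mem_image, mem_compositionsIn (by simp : 0 ∉ Finset.Icc 1 3), Finset.mem_Icc,
    Prod.exists]
  constructor
  · rintro ⟨a, b, ⟨⟨ha, hb⟩, hab⟩, mid, ⟨hmid, hsum⟩, rfl⟩
    refine ⟨⟨a, mid, b, rfl, by omega, by omega, fun x hx => ?_⟩, ?_⟩
    · have := hmid x hx
      omega
    · simp only [List.sum_cons, List.sum_append, List.sum_nil, hsum]
      omega
  · rintro ⟨⟨a, mid, b, rfl, ha, hb, hmid⟩, hsum⟩
    simp only [List.sum_cons, List.sum_append, List.sum_nil] at hsum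
    refine ⟨a, b, ⟨⟨by omega, by omega⟩, by omega⟩, mid, ⟨fun x hx => ?_, by omega⟩, rfl⟩
    rcases hmid x hx with rfl | rfl | rfl <;> omega

lemma card_popStackedCompositions {k : Type*} [Field k] (n : ℕ) :
    ((popStackedCompositions n).card : k) =
      coeff n ((X + X ^ 2) ^ 2 * (1 - (X + X ^ 2 + X ^ 3))⁻¹) := by
  have hA : 0 ∉ Finset.Icc 1 3 := by simp
  have hsum : (X + X ^ 2 + X ^ 3 : k⟦X⟧) = ∑ a ∈ Finset.Icc 1 3, X ^ a := by
    simp [Finset.sum_Icc_succ_top]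
  have hsq : ((X + X ^ 2) ^ 2 : k⟦X⟧) =
      ∑ p ∈ Finset.Icc 1 2 ×ˢ Finset.Icc 1 2, X ^ (p.1 + p.2) := by
    simp only [Finset.sum_product, Nat.reduceAdd, Nat.one_le_ofNat, Finset.sum_Icc_succ_top,
      Finset.Icc_self, Finset.sum_singleton]
    ring
  rw [hsum, inv_one_sub_sum_X_pow hA, hsq, Finset.sum_mul, map_sum, popStackedCompositions,
    Finset.card_biUnion, Finset.sum_filter]
  · push_cast
    refine Finset.sum_congr rfl fun p _ => ?_
    rw [coeff_X_pow_mul', coeff_mk,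
      Finset.card_image_of_injective _ fun l l' h => by simpa using h]
  · rintro p - q - hpq
    simp only [Function.onFun, Finset.disjoint_left, Finset.mem_image]
    rintro _ ⟨l, -, rfl⟩ ⟨l', -, h⟩
    simp only [List.cons.injEq, List.append_singleton_inj] at h
    exact hpq (Prod.ext h.1.symm h.2.2.symm)

lemma natCard_popStacked_layered {n : ℕ} (hn : 2 ≤ n) :
    Nat.card {τ : List ℕ // IsPermList n τ ∧ IsLayered τ ∧ Overlapping τ} =
      (popStackedCompositions n).card := by
  have hinj : Set.InjOn (layeredList 1) (popStackedCompositions n) := fun ms hms ms' hms' h => by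
    rw [← map_length_fallSplit_layeredList (mem_popStackedCompositions.mp hms).1.pos 1, h,
      map_length_fallSplit_layeredList (mem_popStackedCompositions.mp hms').1.pos 1]
  rw [← Finset.card_image_of_injOn hinj, ← Nat.card_eq_finsetCard]
  refine Nat.card_congr (Equiv.subtypeEquivRight fun τ => ?_)
  rw [Finset.mem_image]
  constructor
  · rintro ⟨hperm, ⟨ms, hpos, rfl⟩, hov⟩
    have hsum := isPermList_layeredList_iff.mp hperm
    exact ⟨ms, mem_popStackedCompositions.mpr
      ⟨(overlapping_layeredList_iff hpos (hsum ▸ hn)).mp hov, hsum⟩, rfl⟩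
  · rintro ⟨ms, hms, rfl⟩
    obtain ⟨hshape, hsum⟩ := mem_popStackedCompositions.mp hms
    exact ⟨isPermList_layeredList_iff.mpr hsum, ⟨ms, hshape.pos, rfl⟩,
      (overlapping_layeredList_iff hshape.pos (hsum ▸ hn)).mpr hshape⟩

/-- For n ≥ 2, a layered permutation of size n is pop-stacked iff it has at least two
falls, its outer falls have size 1 or 2 and its inner falls have size 1, 2 or 3;
consequently pop-stacked layered permutations are counted by the coefficients of
x + (x+x²)²/(1−(x+x²+x³)). -/
theorem popStacked_layered_characterization (n : ℕ) (hn : 2 ≤ n) :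
    (∀ τ : List ℕ, IsPermList n τ → IsLayered τ →
      (Overlapping τ ↔
        ∃ F₁ Fmid Fₛ, fallSplit τ = F₁ :: (Fmid ++ [Fₛ]) ∧
          (F₁.length = 1 ∨ F₁.length = 2) ∧ (Fₛ.length = 1 ∨ Fₛ.length = 2) ∧
          ∀ F ∈ Fmid, F.length = 1 ∨ F.length = 2 ∨ F.length = 3)) ∧
    ((Nat.card {τ : List ℕ // IsPermList n τ ∧ IsLayered τ ∧ Overlapping τ} : ℚ) =
      PowerSeries.coeff (R := ℚ) n
        (PowerSeries.X + (PowerSeries.X + PowerSeries.X ^ 2) ^ 2 *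
          (1 - (PowerSeries.X + PowerSeries.X ^ 2 + PowerSeries.X ^ 3))⁻¹)) := by
  constructor
  · rintro τ hperm ⟨ms, hpos, rfl⟩
    rw [overlapping_layeredList_iff hpos (isPermList_layeredList_iff.mp hperm ▸ hn),
      ← isPopStackedComposition_map_iff, map_length_fallSplit_layeredList hpos]
  · rw [natCard_popStacked_layered hn, card_popStackedCompositions, map_add, coeff_X,
      if_neg (by omega), zero_add]
end

section
/- Fix 1 ≤ k ≤ n−1, let ρ = ⊖(n−k, k) be the skew sum of id_{n−k} and id_k (i.e., ρ = (k+1)(k+2)…n 1 2 … k). Then for every permutation π of size n and every m ≥ 0, shadow_k(T^m(π)) ≼ shadow_k(T^m(ρ)) in the poset X(k, n−k). -/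
/-- The k-shadow of a permutation: replace each value ≤ k by S (= true) and each value
> k by L (= false). -/
def shadow (k : ℕ) (l : List ℕ) : List Bool := l.map fun v => decide (v ≤ k)

/-- Replace every factor LS by SL (one step of T on shadows). -/
def stepLS : List Bool → List Bool
  | false :: true :: rest => true :: false :: stepLS rest
  | a :: rest => a :: stepLS rest
  | [] => []

/-- The partial order λ ≼ μ on {S,L}-words: each j-th S (from the left) of λ lies weakly
to the left of the j-th S of μ; equivalently every prefix of λ contains at least as many
S letters as the corresponding prefix of μ. -/
def SPrec (lam mu : List Bool) : Prop :=
  ∀ p : ℕ, (mu.take p).count true ≤ (lam.take p).count true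

/-!
Write `≼` for `SPrec`. Inside a fall (a maximal decreasing factor) the values `≤ k` come last,
so the shadow of a fall is `L^a S^b`. The map `T` turns it into `S^b L^a`, the `≼`-largest word
with these letters, while replacing every `LS` by `SL` acts inside each fall separately, since
a fall ending in `L` is followed by a value `> k`. Hence `shadow_k (T π) ≼ step (shadow_k π)`,
where `step` is `stepLS`. Moreover `step` is monotone for `≼`, because the number of `S` among
the first `p + 1` letters of `step w` is the smaller of the number of `S` among the first `p + 2`
letters of `w` and one more than the number among the first `p`.
By induction, `shadow_k (T^m π) ≼ step^m (shadow_k π) ≼ step^m (L^(n-k) S^k)`, the last step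
because `L^(n-k) S^k` is the `≼`-least word with the letters of `shadow_k π`. For `ρ` the
inequalities are equalities: `T^m ρ` always uses `1, 2, …, k` in order on its `S` positions and
`k + 1, …, n` in order on its `L` positions, so its falls are its `LS` factors and singletons,
and `shadow_k (T^m ρ) = step^m (L^(n-k) S^k)`.
-/

open List

def prefixCount (p : ℕ) (w : List Bool) : ℕ := (w.take p).count true

section PrefixCount

@[simp] lemma prefixCount_zero (w : List Bool) : prefixCount 0 w = 0 := rfl

@[simp] lemma prefixCount_nil (p : ℕ) : prefixCount p [] = 0 := by simp [prefixCount]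

@[simp] lemma prefixCount_succ_cons_true (p : ℕ) (w : List Bool) :
    prefixCount (p + 1) (true :: w) = prefixCount p w + 1 := by
  simp [prefixCount]

@[simp] lemma prefixCount_succ_cons_false (p : ℕ) (w : List Bool) :
    prefixCount (p + 1) (false :: w) = prefixCount p w := by
  simp [prefixCount]

lemma prefixCount_append (p : ℕ) (u v : List Bool) :
    prefixCount p (u ++ v) = prefixCount p u + prefixCount (p - u.length) v := by
  simp [prefixCount, take_append, count_append]

lemma prefixCount_le_min (p : ℕ) (w : List Bool) : prefixCount p w ≤ min p (w.count true) :=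
  le_min ((count_le_length).trans (length_take_le p w)) ((take_sublist p w).count_le _)

end PrefixCount

section SPrec

lemma SPrec.trans {u v w : List Bool} (huv : SPrec u v) (hvw : SPrec v w) : SPrec u w :=
  fun p => (hvw p).trans (huv p)

lemma SPrec.append {u u' v v' : List Bool} (hu : SPrec u u') (hv : SPrec v v')
    (hlen : u.length = u'.length) : SPrec (u ++ v) (u' ++ v') := fun p => by
  show prefixCount p (u' ++ v') ≤ prefixCount p (u ++ v)
  rw [prefixCount_append, prefixCount_append, hlen]
  exact add_le_add (hu p) (hv _)

lemma sPrec_replicate_true_append_replicate_false {a b : ℕ} {w : List Bool}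
    (hw : w.count true ≤ b) : SPrec (replicate b true ++ replicate a false) w := fun p => by
  have hmax : prefixCount p (replicate b true ++ replicate a false) = min p b := by
    rw [prefixCount_append]
    simp [prefixCount, take_replicate, count_replicate]
  show prefixCount p w ≤ prefixCount p _
  rw [hmax]
  exact (prefixCount_le_min p w).trans (min_le_min_left p hw)

lemma sPrec_replicate_false_append_replicate_true {f t : ℕ} {w : List Bool}
    (hw : w.Perm (replicate f false ++ replicate t true)) :
    SPrec w (replicate f false ++ replicate t true) := fun p => by
  have hmin : prefixCount p (replicate f false ++ replicate t true) = min (p - f) t := by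
    rw [prefixCount_append]
    simp [prefixCount, take_replicate, count_replicate]
  have htrue : w.count true = t := by simp [hw.count_eq, count_replicate]
  have hfalse : (w.take p).count false ≤ f := by
    simpa [hw.count_eq, count_replicate] using (take_sublist p w).count_le false
  have hlen : w.length = f + t := by simp [hw.length_eq]
  have hsum := count_true_add_count_false (w.take p)
  have hle := prefixCount_le_min p w
  simp only [prefixCount, length_take] at hmin hsum hle ⊢
  omega

end SPrec

section StepLS

lemma stepLS_cons (a : Bool) (w : List Bool) (h : ∀ r, a = false → w ≠ true :: r) :
    stepLS (a :: w) = a :: stepLS w := by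
  match a, w with
  | true, _ => rfl
  | false, [] => rfl
  | false, true :: r => exact absurd rfl (h r rfl)
  | false, false :: _ => rfl

lemma stepLS_perm (w : List Bool) : (stepLS w).Perm w := by
  induction w using stepLS.induct with
  | case1 w ih => exact ((ih.cons false).cons true).trans (.swap false true w)
  | case2 a w h ih => rw [stepLS_cons a w h]; exact ih.cons a
  | case3 => rfl

lemma count_iterate_stepLS (a : Bool) (m : ℕ) (w : List Bool) :
    (stepLS^[m] w).count a = w.count a := by
  induction m with
  | zero => rfl
  | succ m ih => rw [Function.iterate_succ_apply', (stepLS_perm _).count_eq, ih]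

lemma prefixCount_succ_stepLS (w : List Bool) (p : ℕ) :
    prefixCount (p + 1) (stepLS w) = min (prefixCount (p + 2) w) (prefixCount p w + 1) := by
  induction w using stepLS.induct generalizing p with
  | case1 w ih =>
    rcases p with _ | _ | p
    · simp [stepLS]
    · simp [stepLS]
    · have := ih p
      simp only [stepLS, prefixCount_succ_cons_true, prefixCount_succ_cons_false] at this ⊢
      omega
  | case2 a w h ih =>
    rw [stepLS_cons a w h]
    rcases a, p with ⟨_ | _, _ | p⟩
    · rcases w with _ | ⟨_ | _, _⟩
      · simp
      · simp
      · exact absurd rfl (h _ rfl)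
    · have := ih p
      simp only [prefixCount_succ_cons_false] at this ⊢
      omega
    · simp
    · have := ih p
      simp only [prefixCount_succ_cons_true] at this ⊢
      omega
  | case3 => simp [stepLS]

lemma SPrec.stepLS {u v : List Bool} (h : SPrec u v) : SPrec (_root_.stepLS u) (_root_.stepLS v)
  | 0 => by simp
  | p + 1 => by
    show prefixCount (p + 1) (_root_.stepLS v) ≤ prefixCount (p + 1) (_root_.stepLS u)
    rw [prefixCount_succ_stepLS, prefixCount_succ_stepLS]
    exact min_le_min (h (p + 2)) (Nat.add_le_add_right (h p) 1)

lemma stepLS_append (u v : List Bool) (h : u.getLast? = some false → v.head? ≠ some true) :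
    stepLS (u ++ v) = stepLS u ++ stepLS v := by
  induction u using stepLS.induct with
  | case1 u ih =>
    rw [cons_append, cons_append, stepLS, stepLS, ih, cons_append, cons_append]
    intro hu
    exact h (by rcases u with _ | _ <;> simp_all [getLast?_cons_cons])
  | case2 a u hu ih =>
    have hav : ∀ r, a = false → u ++ v ≠ true :: r := by
      rintro r rfl huv
      rcases u with _ | ⟨b, u⟩
      · exact h rfl (by simp_all)
      · exact hu u rfl (by simp_all)
    rw [cons_append, stepLS_cons a _ hav, stepLS_cons a u hu, ih, cons_append]
    intro hu'
    exact h (by rcases u with _ | _ <;> simp_all [getLast?_cons_cons])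
  | case3 => rfl

end StepLS

section Falls

lemma flatten_fallSplit (l : List ℕ) : (fallSplit l).flatten = l := by
  induction l using fallSplit.induct with
  | case1 => rfl
  | case2 a rest b bs gs hfs hlt ih =>
    rw [hfs] at ih
    rw [fallSplit, hfs, ← ih]
    simp only [if_pos hlt]
    rfl
  | case3 a rest b bs gs hfs hlt ih =>
    rw [hfs] at ih
    rw [fallSplit, hfs, ← ih]
    simp only [if_neg hlt]
    rfl
  | case4 a rest hrest ih =>
    rw [fallSplit]
    split
    · exact absurd ‹_› (hrest _ _ _)
    · rw [flatten_cons, ih]; rfl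

def IsFallDecomposition (L : List (List ℕ)) : Prop :=
  (∀ B ∈ L, B ≠ [] ∧ B.IsChain (· > ·)) ∧
    L.IsChain fun B C => ∀ x ∈ B.getLast?, ∀ y ∈ C.head?, x ≤ y

lemma isFallDecomposition_fallSplit (l : List ℕ) : IsFallDecomposition (fallSplit l) := by
  induction l using fallSplit.induct with
  | case1 => exact ⟨by simp [fallSplit], .nil⟩
  | case2 a rest b bs gs hfs hlt ih =>
    rw [hfs] at ih
    rw [fallSplit, hfs]
    simp only [if_pos hlt]
    obtain ⟨hblocks, hchain⟩ := ih
    refine ⟨?_, ?_⟩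
    · simp only [mem_cons, forall_eq_or_imp] at hblocks ⊢
      exact ⟨⟨cons_ne_nil _ _, hblocks.1.2.cons_cons hlt⟩, hblocks.2⟩
    · rcases gs with _ | ⟨C, gs⟩
      · exact .singleton _
      · rw [isChain_cons_cons] at hchain ⊢
        exact ⟨by simpa [getLast?_cons_cons] using hchain.1, hchain.2⟩
  | case3 a rest b bs gs hfs hlt ih =>
    rw [hfs] at ih
    rw [fallSplit, hfs]
    simp only [if_neg hlt]
    obtain ⟨hblocks, hchain⟩ := ih
    refine ⟨?_, isChain_cons_cons.mpr ⟨by simpa using hlt, hchain⟩⟩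
    simp only [mem_cons, forall_eq_or_imp] at hblocks ⊢
    exact ⟨⟨cons_ne_nil _ _, .singleton _⟩, hblocks⟩
  | case4 a rest hrest ih =>
    rw [fallSplit]
    match hfs : fallSplit rest with
    | [] => exact ⟨by simp, .singleton _⟩
    | [] :: _ => rw [hfs] at ih; exact absurd rfl (ih.1 [] mem_cons_self).1
    | (b :: bs) :: gs => exact absurd hfs (hrest b bs gs)

lemma fallSplit_cons_of_le {a : ℕ} {l : List ℕ} (h : ∀ c ∈ l.head?, a ≤ c) :
    fallSplit (a :: l) = [a] :: fallSplit l := by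
  rw [fallSplit]
  match hfs : fallSplit l with
  | [] => rfl
  | [] :: _ => rfl
  | (b :: bs) :: gs =>
    have hb : l.head? = some b := by rw [← flatten_fallSplit l, hfs]; rfl
    simp only [if_neg (not_lt.mpr (h b hb))]

lemma fallSplit_cons_cons_of_lt {a b : ℕ} {l : List ℕ} (hlt : b < a)
    (h : ∀ c ∈ l.head?, b ≤ c) :
    fallSplit (a :: b :: l) = [a, b] :: fallSplit l := by
  rw [fallSplit, fallSplit_cons_of_le h]
  simp only [if_pos hlt]

lemma flipT_cons_of_le {a : ℕ} {l : List ℕ} (h : ∀ c ∈ l.head?, a ≤ c) :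
    flipT (a :: l) = a :: flipT l := by
  rw [flipT, fallSplit_cons_of_le h]
  rfl

lemma flipT_cons_cons_of_lt {a b : ℕ} {l : List ℕ} (hlt : b < a)
    (h : ∀ c ∈ l.head?, b ≤ c) :
    flipT (a :: b :: l) = b :: a :: flipT l := by
  rw [flipT, fallSplit_cons_cons_of_lt hlt h]
  rfl

end Falls

section Shadow

variable (k : ℕ)

@[simp] lemma shadow_append (u v : List ℕ) :
    shadow k (u ++ v) = shadow k u ++ shadow k v :=
  map_append

@[simp] lemma shadow_reverse (u : List ℕ) : shadow k u.reverse = (shadow k u).reverse :=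
  map_reverse

lemma exists_shadow_eq_of_pairwise_ge {B : List ℕ} (hB : B.Pairwise (· ≥ ·)) :
    ∃ a b, shadow k B = replicate a false ++ replicate b true := by
  induction B with
  | nil => exact ⟨0, 0, rfl⟩
  | cons v B ih =>
    rw [pairwise_cons] at hB
    by_cases hv : v ≤ k
    · refine ⟨0, B.length + 1, ?_⟩
      rw [replicate_zero, nil_append, eq_replicate_iff]
      simp only [shadow, length_map, length_cons, mem_map, mem_cons, true_and]
      rintro _ ⟨x, rfl | hx, rfl⟩
      · simpa using hv
      · simpa using (hB.1 x hx).trans hv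
    · obtain ⟨a, b, h⟩ := ih hB.2
      refine ⟨a + 1, b, ?_⟩
      simp only [shadow, map_cons, hv, decide_false, replicate_succ, cons_append] at h ⊢
      rw [h]

lemma stepLS_shadow_append {u v : List ℕ} (h : ∀ x ∈ u.getLast?, ∀ y ∈ v.head?, x ≤ y) :
    stepLS (shadow k (u ++ v)) = stepLS (shadow k u) ++ stepLS (shadow k v) := by
  rw [shadow_append]
  apply stepLS_append
  intro hu hv
  simp only [shadow, getLast?_map, head?_map, Option.map_eq_some_iff, decide_eq_false_iff_not,
    decide_eq_true_eq] at hu hv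
  obtain ⟨x, hx, hxk⟩ := hu
  obtain ⟨y, hy, hyk⟩ := hv
  exact hxk ((h x hx y hy).trans hyk)

lemma sPrec_shadow_flatten_map_reverse {L : List (List ℕ)} (hL : IsFallDecomposition L) :
    SPrec (shadow k (L.map reverse).flatten) (stepLS (shadow k L.flatten)) := by
  induction L with
  | nil => intro p; simp [shadow, stepLS]
  | cons B L ih =>
    obtain ⟨hblocks, hchain⟩ := hL
    have hjoin : ∀ x ∈ B.getLast?, ∀ y ∈ L.flatten.head?, x ≤ y := by
      rcases L with _ | ⟨C, L⟩
      · simp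
      · obtain ⟨c, C, rfl⟩ := exists_cons_of_ne_nil (hblocks C (by simp)).1
        simpa using (isChain_cons_cons.mp hchain).1
    obtain ⟨a, b, hB⟩ := exists_shadow_eq_of_pairwise_ge k
      ((isChain_iff_pairwise.mp (hblocks B mem_cons_self).2).imp le_of_lt)
    rw [map_cons, flatten_cons, flatten_cons, stepLS_shadow_append k hjoin]
    rw [shadow_append, shadow_reverse, hB, reverse_append, reverse_replicate, reverse_replicate]
    refine SPrec.append ?_ (ih ⟨fun C hC => hblocks C (mem_cons_of_mem B hC), hchain.tail⟩) ?_
    · exact sPrec_replicate_true_append_replicate_false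
        (by simp [(stepLS_perm _).count_eq, count_replicate])
    · simp [(stepLS_perm _).length_eq, add_comm]

lemma sPrec_shadow_flipT (x : List ℕ) : SPrec (shadow k (flipT x)) (stepLS (shadow k x)) := by
  have h := sPrec_shadow_flatten_map_reverse k (isFallDecomposition_fallSplit x)
  rwa [flatten_fallSplit] at h

lemma sPrec_shadow_iterate_flipT {x : List ℕ} {w : List Bool} (h : SPrec (shadow k x) w)
    (m : ℕ) : SPrec (shadow k (flipT^[m] x)) (stepLS^[m] w) := by
  induction m with
  | zero => exact h
  | succ m ih =>
    rw [Function.iterate_succ_apply', Function.iterate_succ_apply']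
    exact (sPrec_shadow_flipT k _).trans ih.stepLS

end Shadow

section FillWord

def fillWord (s b : ℕ) : List Bool → List ℕ
  | [] => []
  | true :: w => s :: fillWord (s + 1) b w
  | false :: w => b :: fillWord s (b + 1) w

lemma min_le_of_mem_fillWord {s b c : ℕ} {w : List Bool} (h : c ∈ fillWord s b w) :
    min s b ≤ c := by
  induction w generalizing s b with
  | nil => simp [fillWord] at h
  | cons x w ih =>
    cases x <;> simp only [fillWord, mem_cons] at h <;> rcases h with rfl | h
    · omega
    · have := ih h; omega
    · omega
    · have := ih h; omega

lemma flipT_fillWord (w : List Bool) {s b : ℕ} (h : s + w.count true ≤ b) :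
    flipT (fillWord s b w) = fillWord s b (stepLS w) := by
  induction w using stepLS.induct generalizing s b with
  | case1 w ih =>
    simp only [count_cons_self, count_cons_of_ne Bool.false_ne_true] at h
    have hhead : ∀ c ∈ (fillWord (s + 1) (b + 1) w).head?, s ≤ c := fun c hc => by
      have := min_le_of_mem_fillWord (mem_of_mem_head? hc); omega
    rw [stepLS, fillWord, fillWord, fillWord, fillWord, flipT_cons_cons_of_lt (by omega) hhead,
      ih (by omega)]
  | case2 a w hw ih =>
    rw [stepLS_cons a w hw]
    cases a
    · simp only [count_cons_of_ne Bool.false_ne_true] at h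
      have hhead : ∀ c ∈ (fillWord s (b + 1) w).head?, b ≤ c := by
        rcases w with _ | ⟨_ | _, w⟩
        · simp [fillWord]
        · simp [fillWord]
        · exact absurd rfl (hw w rfl)
      rw [fillWord, fillWord, flipT_cons_of_le hhead, ih (by omega)]
    · simp only [count_cons_self] at h
      have hhead : ∀ c ∈ (fillWord (s + 1) b w).head?, s ≤ c := fun c hc => by
        have := min_le_of_mem_fillWord (mem_of_mem_head? hc); omega
      rw [fillWord, fillWord, flipT_cons_of_le hhead, ih (by omega)]
  | case3 => rfl

lemma iterate_flipT_fillWord {s b : ℕ} {w : List Bool} (h : s + w.count true ≤ b) (m : ℕ) :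
    flipT^[m] (fillWord s b w) = fillWord s b (stepLS^[m] w) := by
  induction m with
  | zero => rfl
  | succ m ih =>
    rw [Function.iterate_succ_apply', Function.iterate_succ_apply', ih,
      flipT_fillWord _ (by rwa [count_iterate_stepLS])]

lemma shadow_fillWord {k s b : ℕ} (w : List Bool) (hs : s + w.count true ≤ k + 1) (hb : k < b) :
    shadow k (fillWord s b w) = w := by
  induction w generalizing s b with
  | nil => rfl
  | cons x w ih =>
    cases x
    · simp only [count_cons_of_ne Bool.false_ne_true] at hs
      simp only [fillWord, shadow, map_cons, show ¬b ≤ k by omega, decide_false] at ih ⊢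
      rw [ih hs (by omega)]
    · simp only [count_cons_self] at hs
      simp only [fillWord, shadow, map_cons, show s ≤ k by omega, decide_true] at ih ⊢
      rw [ih (by omega) hb]

lemma fillWord_replicate_true (s b t : ℕ) : fillWord s b (replicate t true) = range' s t := by
  induction t generalizing s with
  | zero => rfl
  | succ t ih => rw [replicate_succ, fillWord, ih, range'_succ]

lemma fillWord_replicate_append_replicate (s b f t : ℕ) :
    fillWord s b (replicate f false ++ replicate t true) = range' b f ++ range' s t := by
  induction f generalizing b with
  | zero => exact fillWord_replicate_true s b t
  | succ f ih => rw [replicate_succ, cons_append, fillWord, ih, range'_succ, cons_append]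

end FillWord

theorem shadow_majorated_by_rho_general (n k : ℕ) (hk2 : k ≤ n - 1)
    (π : List ℕ) (hπ : IsPermList n π) (m : ℕ) :
    SPrec (shadow k (flipT^[m] π))
      (shadow k (flipT^[m] (List.range' (k + 1) (n - k) ++ List.range' 1 k))) := by
  set w₀ := replicate (n - k) false ++ replicate k true
  have hw₀ : 1 + w₀.count true ≤ k + 1 := by simp [w₀, count_replicate, add_comm]
  have hρ : range' (k + 1) (n - k) ++ range' 1 k = fillWord 1 (k + 1) w₀ :=
    (fillWord_replicate_append_replicate 1 (k + 1) (n - k) k).symm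
  rw [hρ, iterate_flipT_fillWord hw₀,
    shadow_fillWord _ (by rwa [count_iterate_stepLS]) (lt_add_one k)]
  refine sPrec_shadow_iterate_flipT k (sPrec_replicate_false_append_replicate_true ?_) m
  have hsplit : range' 1 n = range' 1 k ++ range' (k + 1) (n - k) := by
    rw [show k + 1 = 1 + 1 * k by omega, range'_append, Nat.add_sub_cancel' (by omega)]
  calc shadow k π ~ shadow k (range' 1 n) := hπ.map _
    _ ~ shadow k (fillWord 1 (k + 1) w₀) := by
      rw [← hρ, hsplit]; exact perm_append_comm.map _
    _ = w₀ := shadow_fillWord w₀ hw₀ (lt_add_one k)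

/-- For ρ = ⊖(n−k, k) = (k+1)(k+2)…n 1 2…k and every permutation π of size n,
shadow_k(T^m(π)) ≼ shadow_k(T^m(ρ)) for all m ≥ 0. -/
theorem shadow_majorated_by_rho (n k : ℕ) (hk1 : 1 ≤ k) (hk2 : k ≤ n - 1)
    (π : List ℕ) (hπ : IsPermList n π) (m : ℕ) :
    SPrec (shadow k (flipT^[m] π))
      (shadow k (flipT^[m] (List.range' (k + 1) (n - k) ++ List.range' 1 k))) :=
  shadow_majorated_by_rho_general n k hk2 π hπ m
end
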